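/- arXiv:2409.04891 — 3 statements merged into one kernel-verified Lean document; each statement's English description precedes it below -/
import Mathlib

section
/- Let n, m ∈ ℕ, let M₁ be a symmetric n×n real matrix, M₂ a symmetric m×m real matrix, and let K : ℝⁿ × ℝᵐ → ℝ be twice continuously differentiable. Define H : ℝⁿ×ℝᵐ → ℝ by H(e,b) = K(e,b) − ⟨∇ₑK(e,b), e⟩ + (1/(8π))(⟨M₁e, e⟩ + ⟨M₂b, b⟩), and Φ : ℝⁿ×ℝᵐ → ℝⁿ×ℝᵐ by Φ(e,b) = (M₁e − 4π∇ₑK(e,b), b). Suppose U ⊆ ℝⁿ×ℝᵐ is open and Ψ : U → ℝⁿ×ℝᵐ is differentiable with Φ(Ψ(d,b)) = (d,b) for all (d,b) ∈ U; write Ψ(d,b) = (e(d,b), b) (the second component of Ψ is necessarily b). Then the Hamiltonian in the new variables, H̄ = H ∘ Ψ, satisfies ∇_d H̄(d,b) = e(d,b)/(4π) and ∇_b H̄(d,b) = (M₂b + 4π∇_bK(e(d,b), b))/(4π) for all (d,b) ∈ U. -/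
/-!
On `U`, the identity `Φ ∘ Ψ = id` says that `d = M₁e − 4π∇ₑK(e, b)` for `e = (Ψ (d, b)).1`, hence
`⟨∇ₑK, e⟩ = (⟨M₁e, e⟩ − ⟨d, e⟩)/4π` and, as in a Legendre transform,
`H̄(d, b) = K(e, b) + (⟨d, e⟩ − ⟨M₁e, e⟩/2 + ⟨M₂b, b⟩/2)/4π`.
Differentiating, the terms containing the derivative `ė` of `e` add up to
`⟨∇ₑK − M₁e/4π + d/4π, ė⟩ = 0` (by the symmetry of `M₁`), which leaves
`⟨ḋ, e⟩/4π + ⟨M₂b, ḃ⟩/4π + ∂_bK(e, b)[ḃ]`.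
-/

open Real

/-- Partial gradient of `K(e, b)` with respect to its first (electric) argument,
computed componentwise against the standard basis. -/
noncomputable def gradE {n m : ℕ} (K : (Fin n → ℝ) × (Fin m → ℝ) → ℝ)
    (e : Fin n → ℝ) (b : Fin m → ℝ) : Fin n → ℝ :=
  fun i => fderiv ℝ (fun e' => K (e', b)) e (Pi.single i 1)

/-- Partial gradient of `K(e, b)` with respect to its second (magnetic) argument. -/
noncomputable def gradB {n m : ℕ} (K : (Fin n → ℝ) × (Fin m → ℝ) → ℝ)
    (e : Fin n → ℝ) (b : Fin m → ℝ) : Fin m → ℝ :=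
  fun i => fderiv ℝ (fun b' => K (e, b')) b (Pi.single i 1)

open Matrix

theorem Matrix.IsSymm.mulVec_dotProduct_comm {ι R : Type*} [Fintype ι] [CommSemiring R]
    {M : Matrix ι ι R} (hM : M.IsSymm) (u v : ι → R) : M *ᵥ u ⬝ᵥ v = M *ᵥ v ⬝ᵥ u := by
  rw [dotProduct_comm, dotProduct_mulVec, ← mulVec_transpose, hM.eq]

theorem ContinuousLinearMap.apply_single_dotProduct {ι R : Type*} [Fintype ι] [DecidableEq ι]
    [CommSemiring R] [TopologicalSpace R] (L : (ι → R) →L[R] R) (u : ι → R) :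
    (fun i => L (Pi.single i 1)) ⬝ᵥ u = L u := by
  conv_rhs => rw [pi_eq_sum_univ' u, map_sum]
  simp [dotProduct, mul_comm]

section Calculus

variable {𝕜 ι κ G : Type*} [NontriviallyNormedField 𝕜] [Fintype ι] [Fintype κ]
  [NormedAddCommGroup G] [NormedSpace 𝕜 G] {f g : G → ι → 𝕜} {x : G}

theorem HasFDerivAt.dotProduct {f' g' : G →L[𝕜] ι → 𝕜} (hf : HasFDerivAt f f' x)
    (hg : HasFDerivAt g g' x) :
    HasFDerivAt (fun y => f y ⬝ᵥ g y)
      (∑ i, (f x i • (ContinuousLinearMap.proj i).comp g'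
        + g x i • (ContinuousLinearMap.proj i).comp f')) x :=
  HasFDerivAt.fun_sum fun i _ => (hasFDerivAt_pi'.1 hf i).mul (hasFDerivAt_pi'.1 hg i)

@[fun_prop]
theorem DifferentiableAt.dotProduct (hf : DifferentiableAt 𝕜 f x) (hg : DifferentiableAt 𝕜 g x) :
    DifferentiableAt 𝕜 (fun y => f y ⬝ᵥ g y) x :=
  (hf.hasFDerivAt.dotProduct hg.hasFDerivAt).differentiableAt

theorem fderiv_dotProduct_apply (hf : DifferentiableAt 𝕜 f x) (hg : DifferentiableAt 𝕜 g x)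
    (w : G) :
    fderiv 𝕜 (fun y => f y ⬝ᵥ g y) x w = fderiv 𝕜 f x w ⬝ᵥ g x + f x ⬝ᵥ fderiv 𝕜 g x w := by
  rw [(hf.hasFDerivAt.dotProduct hg.hasFDerivAt).fderiv]
  simp [dotProduct, Finset.sum_add_distrib, mul_comm, add_comm]

variable [CompleteSpace 𝕜]

theorem HasFDerivAt.mulVec (M : Matrix κ ι 𝕜) {f' : G →L[𝕜] ι → 𝕜} (hf : HasFDerivAt f f' x) :
    HasFDerivAt (fun y => M *ᵥ f y) ((LinearMap.toContinuousLinearMap (mulVecLin M)).comp f') x :=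
  (LinearMap.toContinuousLinearMap (mulVecLin M)).hasFDerivAt.comp x hf

@[fun_prop]
theorem DifferentiableAt.mulVec (M : Matrix κ ι 𝕜) (hf : DifferentiableAt 𝕜 f x) :
    DifferentiableAt 𝕜 (fun y => M *ᵥ f y) x :=
  (hf.hasFDerivAt.mulVec M).differentiableAt

theorem fderiv_mulVec_apply (M : Matrix κ ι 𝕜) (hf : DifferentiableAt 𝕜 f x) (w : G) :
    fderiv 𝕜 (fun y => M *ᵥ f y) x w = M *ᵥ fderiv 𝕜 f x w := by
  rw [(hf.hasFDerivAt.mulVec M).fderiv]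
  rfl

theorem fderiv_mulVec_dotProduct_self_apply {M : Matrix ι ι 𝕜} (hM : M.IsSymm)
    (hf : DifferentiableAt 𝕜 f x) (w : G) :
    fderiv 𝕜 (fun y => M *ᵥ f y ⬝ᵥ f y) x w = 2 * (M *ᵥ f x ⬝ᵥ fderiv 𝕜 f x w) := by
  rw [fderiv_dotProduct_apply (hf.mulVec M) hf, fderiv_mulVec_apply M hf,
    hM.mulVec_dotProduct_comm, dotProduct_comm]
  ring

end Calculus

section Gradients

variable {n m : ℕ} {K : (Fin n → ℝ) × (Fin m → ℝ) → ℝ} {e : Fin n → ℝ} {b : Fin m → ℝ}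

theorem gradE_dotProduct (hK : DifferentiableAt ℝ K (e, b)) (u : Fin n → ℝ) :
    gradE K e b ⬝ᵥ u = fderiv ℝ K (e, b) (u, 0) := by
  have h : HasFDerivAt (fun e' => K (e', b))
      ((fderiv ℝ K (e, b)).comp (ContinuousLinearMap.inl ℝ _ _)) e :=
    hK.hasFDerivAt.comp e (hasFDerivAt_prodMk_left e b)
  unfold gradE
  rw [h.fderiv, ContinuousLinearMap.apply_single_dotProduct]
  rfl

theorem gradB_dotProduct (hK : DifferentiableAt ℝ K (e, b)) (v : Fin m → ℝ) :
    gradB K e b ⬝ᵥ v = fderiv ℝ K (e, b) (0, v) := by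
  have h : HasFDerivAt (fun b' => K (e, b'))
      ((fderiv ℝ K (e, b)).comp (ContinuousLinearMap.inr ℝ _ _)) b :=
    hK.hasFDerivAt.comp b (hasFDerivAt_prodMk_right e b)
  unfold gradB
  rw [h.fderiv, ContinuousLinearMap.apply_single_dotProduct]
  rfl

end Gradients

section Legendre

variable {n m : ℕ} {K : (Fin n → ℝ) × (Fin m → ℝ) → ℝ} {M₁ : Matrix (Fin n) (Fin n) ℝ}
  {M₂ : Matrix (Fin m) (Fin m) ℝ} {c : ℝ}

theorem hamiltonian_eq_of_displacement (hc : c ≠ 0) {e d : Fin n → ℝ} (b : Fin m → ℝ)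
    (hd : M₁ *ᵥ e - c • gradE K e b = d) :
    K (e, b) - gradE K e b ⬝ᵥ e + 1 / (2 * c) * (M₁ *ᵥ e ⬝ᵥ e + M₂ *ᵥ b ⬝ᵥ b)
      = K (e, b) + c⁻¹ * (d ⬝ᵥ e - 2⁻¹ * (M₁ *ᵥ e ⬝ᵥ e - M₂ *ᵥ b ⬝ᵥ b)) := by
  subst hd
  rw [sub_dotProduct, smul_dotProduct, smul_eq_mul]
  field_simp
  ring

/-- The Hamiltonian `H̄(d, b)` of the paper, with `H` rewritten by
`hamiltonian_eq_of_displacement` and the electric field given by `e = ψ (d, b)`. -/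
noncomputable def transformedHamiltonian (K : (Fin n → ℝ) × (Fin m → ℝ) → ℝ)
    (M₁ : Matrix (Fin n) (Fin n) ℝ) (M₂ : Matrix (Fin m) (Fin m) ℝ) (c : ℝ)
    (ψ : (Fin n → ℝ) × (Fin m → ℝ) → Fin n → ℝ) (q : (Fin n → ℝ) × (Fin m → ℝ)) : ℝ :=
  K (ψ q, q.2) + c⁻¹ * (q.1 ⬝ᵥ ψ q - 2⁻¹ * (M₁ *ᵥ ψ q ⬝ᵥ ψ q - M₂ *ᵥ q.2 ⬝ᵥ q.2))

variable {ψ : (Fin n → ℝ) × (Fin m → ℝ) → Fin n → ℝ} {q : (Fin n → ℝ) × (Fin m → ℝ)}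

theorem differentiableAt_transformedHamiltonian (hψ : DifferentiableAt ℝ ψ q)
    (hK : DifferentiableAt ℝ K (ψ q, q.2)) :
    DifferentiableAt ℝ (transformedHamiltonian K M₁ M₂ c ψ) q := by
  have hKψ : DifferentiableAt ℝ (fun p => K (ψ p, p.2)) q :=
    hK.comp q (hψ.prodMk differentiableAt_snd)
  unfold transformedHamiltonian
  fun_prop

theorem fderiv_transformedHamiltonian_apply (hc : c ≠ 0) (hM₁ : M₁.IsSymm) (hM₂ : M₂.IsSymm)
    (hψ : DifferentiableAt ℝ ψ q) (hK : DifferentiableAt ℝ K (ψ q, q.2))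
    (hd : M₁ *ᵥ ψ q - c • gradE K (ψ q) q.2 = q.1) (w : (Fin n → ℝ) × (Fin m → ℝ)) :
    fderiv ℝ (transformedHamiltonian K M₁ M₂ c ψ) q w
      = (w.1 ⬝ᵥ ψ q + M₂ *ᵥ q.2 ⬝ᵥ w.2) / c + fderiv ℝ K (ψ q, q.2) (0, w.2) := by
  set u := fderiv ℝ ψ q w
  have hψ₂ : DifferentiableAt ℝ (fun p => (ψ p, p.2)) q := hψ.prodMk differentiableAt_snd
  have hF : HasFDerivAt (transformedHamiltonian K M₁ M₂ c ψ)
      (fderiv ℝ (fun p => K (ψ p, p.2)) q + c⁻¹ • (fderiv ℝ (fun p => p.1 ⬝ᵥ ψ p) q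
        - (2⁻¹ : ℝ) • (fderiv ℝ (fun p => M₁ *ᵥ ψ p ⬝ᵥ ψ p) q
          - fderiv ℝ (fun p => M₂ *ᵥ p.2 ⬝ᵥ p.2) q))) q :=
    (hK.comp q hψ₂).hasFDerivAt.add
      (((differentiableAt_fst.dotProduct hψ).hasFDerivAt.sub
        ((((hψ.mulVec M₁).dotProduct hψ).hasFDerivAt.sub
          ((differentiableAt_snd.mulVec M₂).dotProduct
            differentiableAt_snd).hasFDerivAt).const_mul 2⁻¹)).const_mul c⁻¹)
  have hK' : fderiv ℝ (fun p => K (ψ p, p.2)) q w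
      = gradE K (ψ q) q.2 ⬝ᵥ u + fderiv ℝ K (ψ q, q.2) (0, w.2) := by
    rw [fderiv_fun_comp q hK hψ₂, hψ.fderiv_prodMk differentiableAt_snd, fderiv_snd,
      gradE_dotProduct hK, ← map_add, Prod.mk_add_mk, add_zero, zero_add]
    rfl
  have hpair : fderiv ℝ (fun p => p.1 ⬝ᵥ ψ p) q w = w.1 ⬝ᵥ ψ q + q.1 ⬝ᵥ u := by
    rw [fderiv_dotProduct_apply differentiableAt_fst hψ, fderiv_fst]
    rfl
  have hquad₁ := fderiv_mulVec_dotProduct_self_apply hM₁ hψ w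
  have hquad₂ := fderiv_mulVec_dotProduct_self_apply hM₂ (differentiableAt_snd (p := q)) w
  rw [fderiv_snd] at hquad₂
  rw [hF.fderiv]
  simp only [_root_.add_apply, _root_.smul_apply, _root_.sub_apply, smul_eq_mul]
  rw [hK', hpair, hquad₁, hquad₂, ← hd, sub_dotProduct, smul_dotProduct, smul_eq_mul,
    ContinuousLinearMap.coe_snd']
  field_simp
  ring

end Legendre

/-- Coefficient-level constitutive identities `∇_d H̄ = e/(4π)` and
`∇_b H̄ = (M₂ b + 4π ∇_b K)/(4π)` for the Hamiltonian
`H(e,b) = K(e,b) − ⟨∇ₑK(e,b), e⟩ + (1/(8π))(⟨M₁e,e⟩ + ⟨M₂b,b⟩)` expressed in the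
variables `(d, b) = Φ(e, b) = (M₁e − 4π∇ₑK(e,b), b)` via a differentiable local
inverse `Ψ` of `Φ`. -/
theorem discrete_constitutive_gradients (n m : ℕ)
    (M₁ : Matrix (Fin n) (Fin n) ℝ) (M₂ : Matrix (Fin m) (Fin m) ℝ)
    (hM₁ : M₁.IsSymm) (hM₂ : M₂.IsSymm)
    (K : (Fin n → ℝ) × (Fin m → ℝ) → ℝ) (hK : ContDiff ℝ 2 K)
    (H : (Fin n → ℝ) × (Fin m → ℝ) → ℝ)
    (hH : ∀ e b, H (e, b) = K (e, b) - (∑ i, gradE K e b i * e i)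
      + (1 / (8 * π)) * ((∑ i, M₁.mulVec e i * e i) + ∑ i, M₂.mulVec b i * b i))
    (Φ : (Fin n → ℝ) × (Fin m → ℝ) → (Fin n → ℝ) × (Fin m → ℝ))
    (hΦ : ∀ e b, Φ (e, b) = (M₁.mulVec e - (4 * π) • gradE K e b, b))
    (U : Set ((Fin n → ℝ) × (Fin m → ℝ))) (hU : IsOpen U)
    (Ψ : (Fin n → ℝ) × (Fin m → ℝ) → (Fin n → ℝ) × (Fin m → ℝ))
    (hΨdiff : ∀ p ∈ U, DifferentiableAt ℝ Ψ p)
    (hΨΦ : ∀ p ∈ U, Φ (Ψ p) = p) :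
    ∀ d b, (d, b) ∈ U →
      (∀ i, fderiv ℝ (fun d' => H (Ψ (d', b))) d (Pi.single i 1)
          = (Ψ (d, b)).1 i / (4 * π)) ∧
      (∀ i, fderiv ℝ (fun b' => H (Ψ (d, b'))) b (Pi.single i 1)
          = (M₂.mulVec b i + 4 * π * gradB K (Ψ (d, b)).1 b i) / (4 * π)) := by
  intro d b hdb
  have h4π : (4 : ℝ) * π ≠ 0 := by positivity
  have hΨ : ∀ q ∈ U, Ψ q = ((Ψ q).1, q.2) ∧
      M₁ *ᵥ (Ψ q).1 - (4 * π) • gradE K (Ψ q).1 q.2 = q.1 := by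
    intro q hq
    have h : Φ (Ψ q) = (M₁ *ᵥ (Ψ q).1 - (4 * π) • gradE K (Ψ q).1 (Ψ q).2, (Ψ q).2) :=
      hΦ _ _
    obtain ⟨hd, hb⟩ := Prod.ext_iff.1 ((hΨΦ q hq).symm.trans h)
    rw [hb]
    exact ⟨rfl, hd.symm⟩
  have hHΨ : (fun q => H (Ψ q)) =ᶠ[nhds (d, b)]
      transformedHamiltonian K M₁ M₂ (4 * π) (fun q => (Ψ q).1) := by
    filter_upwards [hU.mem_nhds hdb] with q hq
    obtain ⟨hΨq, hdq⟩ := hΨ q hq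
    rw [hΨq, hH, show (8 : ℝ) * π = 2 * (4 * π) by ring]
    exact hamiltonian_eq_of_displacement h4π q.2 hdq
  have hψ : DifferentiableAt ℝ (fun q => (Ψ q).1) (d, b) := (hΨdiff _ hdb).fst
  have hKe : DifferentiableAt ℝ K ((Ψ (d, b)).1, b) := hK.differentiable two_ne_zero _
  have hHbar :=
    (differentiableAt_transformedHamiltonian hψ hKe).hasFDerivAt.congr_of_eventuallyEq hHΨ
  have hHbar_apply := fderiv_transformedHamiltonian_apply h4π hM₁ hM₂ hψ hKe (hΨ _ hdb).2
  refine ⟨fun i => ?_, fun i => ?_⟩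
  · rw [HasFDerivAt.fderiv (f := fun d' => H (Ψ (d', b)))
      (hHbar.comp (g := fun q => H (Ψ q)) d (hasFDerivAt_prodMk_left d b))]
    simp only [ContinuousLinearMap.comp_apply, ContinuousLinearMap.inl_apply, hHbar_apply,
      single_dotProduct, one_mul, dotProduct_zero, add_zero, Prod.mk_zero_zero, map_zero]
  · rw [HasFDerivAt.fderiv (f := fun b' => H (Ψ (d, b')))
      (hHbar.comp (g := fun q => H (Ψ q)) b (hasFDerivAt_prodMk_right d b))]
    simp only [ContinuousLinearMap.comp_apply, ContinuousLinearMap.inr_apply, hHbar_apply,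
      ← gradB_dotProduct hKe, zero_dotProduct, zero_add, dotProduct_single, mul_one]
    field_simp
end

section
/- Let N₀, N₁, N₂, N₃ ∈ ℕ and let 𝕕₀ ∈ ℝ^{N₁×N₀}, 𝕕₁ ∈ ℝ^{N₂×N₁}, 𝕕₂ ∈ ℝ^{N₃×N₂} be matrices with 𝕕₁𝕕₀ = 0 and 𝕕₂𝕕₁ = 0, and let M₂ ∈ ℝ^{N₂×N₂}. Suppose D̃ : ℝ → ℝ^{N₁}, B : ℝ → ℝ^{N₂}, and E : ℝ → ℝ^{N₁} are such that D̃ and B are differentiable and satisfy D̃'(t) = 𝕕₁ᵀ M₂ B(t) and B'(t) = −𝕕₁ E(t) for all t. Then 𝕕₀ᵀ D̃(t) and 𝕕₂ B(t) are constant in t. -/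
/-!
Both Gauss laws are linear functionals of the state whose time derivatives vanish identically:
`𝕕₀ᵀ D̃' = (𝕕₁ 𝕕₀)ᵀ M₂ B = 0` and `𝕕₂ B' = -(𝕕₂ 𝕕₁) E = 0`, so both are constant by the mean
value theorem.
-/

section

variable {𝕜 E F : Type*} [RCLike 𝕜] [NormedAddCommGroup E] [NormedSpace 𝕜 E]
  [NormedAddCommGroup F] [NormedSpace 𝕜 F]

theorem ContinuousLinearMap.apply_eq_of_hasDerivAt_mem_ker (L : E →L[𝕜] F) {f f' : 𝕜 → E}
    (hf : ∀ t, HasDerivAt f (f' t) t) (hker : ∀ t, L (f' t) = 0) (s t : 𝕜) :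
    L (f s) = L (f t) := by
  have hLf : ∀ t, HasDerivAt (L ∘ f) 0 t := fun t => by
    simpa only [hker t] using L.hasFDerivAt.comp_hasDerivAt t (hf t)
  exact is_const_of_deriv_eq_zero (fun t => (hLf t).differentiableAt) (fun t => (hLf t).deriv) s t

end

namespace Matrix

theorem mulVec_mulVec_eq_zero {l m n R : Type*} [Fintype m] [Fintype n] [CommSemiring R]
    {A : Matrix l m R} {B : Matrix m n R} (h : A * B = 0) (v : n → R) :
    A *ᵥ (B *ᵥ v) = 0 := by
  rw [mulVec_mulVec, h, zero_mulVec]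

theorem mulVec_eq_of_hasDerivAt_mulVec_eq_zero {m n 𝕜 : Type*} [Fintype m] [Fintype n]
    [RCLike 𝕜] (A : Matrix m n 𝕜) {f f' : 𝕜 → n → 𝕜} (hf : ∀ t, HasDerivAt f (f' t) t)
    (hker : ∀ t, A *ᵥ f' t = 0) (s t : 𝕜) : A *ᵥ f s = A *ᵥ f t :=
  (LinearMap.toContinuousLinearMap A.mulVecLin).apply_eq_of_hasDerivAt_mem_ker hf hker s t

end Matrix

/-- Discrete Gauss laws as Casimir invariants: for semi-discrete Maxwell evolution
`D̃' = 𝕕₁ᵀ M₂ B`, `B' = −𝕕₁ E` with `𝕕₁𝕕₀ = 0` and `𝕕₂𝕕₁ = 0`, the quantities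
`𝕕₀ᵀ D̃` and `𝕕₂ B` are constant in time. -/
theorem discrete_gauss_laws (N₀ N₁ N₂ N₃ : ℕ)
    (d0 : Matrix (Fin N₁) (Fin N₀) ℝ) (d1 : Matrix (Fin N₂) (Fin N₁) ℝ)
    (d2 : Matrix (Fin N₃) (Fin N₂) ℝ)
    (h10 : d1 * d0 = 0) (h21 : d2 * d1 = 0)
    (M₂ : Matrix (Fin N₂) (Fin N₂) ℝ)
    (D : ℝ → Fin N₁ → ℝ) (B : ℝ → Fin N₂ → ℝ) (E : ℝ → Fin N₁ → ℝ)
    (hD : ∀ t, HasDerivAt D (d1.transpose.mulVec (M₂.mulVec (B t))) t)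
    (hB : ∀ t, HasDerivAt B (-(d1.mulVec (E t))) t) :
    ∀ s t : ℝ, d0.transpose.mulVec (D s) = d0.transpose.mulVec (D t) ∧
      d2.mulVec (B s) = d2.mulVec (B t) := by
  have h01 : d0.transpose * d1.transpose = 0 := by
    rw [← Matrix.transpose_mul, h10, Matrix.transpose_zero]
  intro s t
  constructor
  · exact d0.transpose.mulVec_eq_of_hasDerivAt_mulVec_eq_zero hD
      (fun _ => Matrix.mulVec_mulVec_eq_zero h01 _) s t
  · exact d2.mulVec_eq_of_hasDerivAt_mulVec_eq_zero hB
      (fun _ => by rw [Matrix.mulVec_neg, Matrix.mulVec_mulVec_eq_zero h21, neg_zero]) s t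
end

section
/- Let v, β ∈ ℝ with v ≠ 0, and define f, g : ℝ → ℝ by f(E) = (1 − v²(1 + E²))² and g(E) = ((1 − v²)(1 − βv²)/v²) E² + ((3βv² + v² − 4)/6) E⁴ + (v²/9) E⁶. Then for all E, Φ ∈ ℝ with 1 − v²(1 + E²) ≠ 0, − f'(E) Φ² / (2 f(E)) − g'(E) / (2 f(E)) = (2 v² E Φ² − (1/v² − β) E + E³/3) / (1 − v²(1 + E²)), where f' and g' denote the derivatives of f and g. Consequently, the rescaled traveling-wave system E' = Φ, Φ' = (2v²EΦ² − (1/v² − β)E + E³/3)/(1 − v²(1 + E²)) is the noncanonical Hamiltonian system with Hamiltonian H(E, Φ) = f(E)Φ² + g(E) and Poisson matrix J(E) = [[0, (2f(E))⁻¹], [−(2f(E))⁻¹, 0]]. -/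
theorem hasDerivAt_sq_one_sub_mul_one_add_sq (v E : ℝ) :
    HasDerivAt (fun x : ℝ => (1 - v ^ 2 * (1 + x ^ 2)) ^ 2)
      (-4 * v ^ 2 * E * (1 - v ^ 2 * (1 + E ^ 2))) E := by
  have hinner : HasDerivAt (fun x : ℝ => 1 - v ^ 2 * (1 + x ^ 2)) (-(v ^ 2 * (2 * E))) E := by
    simpa using (((hasDerivAt_pow 2 E).const_add 1).const_mul (v ^ 2)).const_sub 1
  exact (hinner.fun_pow 2).congr_deriv (by norm_num; ring)

theorem hasDerivAt_even_sextic (a b c E : ℝ) :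
    HasDerivAt (fun x : ℝ => a * x ^ 2 + b * x ^ 4 + c * x ^ 6)
      (2 * a * E + 4 * b * E ^ 3 + 6 * c * E ^ 5) E := by
  refine (((hasDerivAt_pow 2 E).const_mul a).fun_add ((hasDerivAt_pow 4 E).const_mul b)).fun_add
    ((hasDerivAt_pow 6 E).const_mul c) |>.congr_deriv ?_
  norm_num
  ring

theorem deriv_mul_sq_add_const (a b Φ : ℝ) :
    deriv (fun Φ' : ℝ => a * Φ' ^ 2 + b) Φ = 2 * a * Φ := by
  convert (((hasDerivAt_pow 2 Φ).const_mul a).add_const b).deriv using 1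
  ring

theorem deriv_mul_const_add {f g : ℝ → ℝ} {E : ℝ} (hf : DifferentiableAt ℝ f E)
    (hg : DifferentiableAt ℝ g E) (c : ℝ) :
    deriv (fun E' => f E' * c + g E') E = deriv f E * c + deriv g E :=
  ((hf.hasDerivAt.mul_const c).add hg.hasDerivAt).deriv

/-- The factor `1 - v²(1 + E²)` of `g'` cancels one power of `f = (1 - v²(1 + E²))²`, leaving the
denominator of the traveling-wave equation. -/
theorem potential_deriv_factor {v : ℝ} (hv : v ≠ 0) (β E : ℝ) :
    2 * ((1 - v ^ 2) * (1 - β * v ^ 2) / v ^ 2) * E + 4 * ((3 * β * v ^ 2 + v ^ 2 - 4) / 6) * E ^ 3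
        + 6 * (v ^ 2 / 9) * E ^ 5
      = 2 * (1 - v ^ 2 * (1 + E ^ 2)) * ((1 / v ^ 2 - β) * E - E ^ 3 / 3) := by
  field_simp
  ring

/-- The rescaled traveling-wave system `E' = Φ`,
`Φ' = (2v²EΦ² − (1/v² − β)E + E³/3)/(1 − v²(1 + E²))` is the noncanonical
Hamiltonian system with Hamiltonian `H(E, Φ) = f(E)Φ² + g(E)` and Poisson matrix
`J(E) = [[0, (2f(E))⁻¹], [−(2f(E))⁻¹, 0]]`: one has
`−f'(E)Φ²/(2f(E)) − g'(E)/(2f(E)) = (2v²EΦ² − (1/v² − β)E + E³/3)/(1 − v²(1 + E²))`,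
so `E' = (2f(E))⁻¹ ∂_Φ H` and `Φ' = −(2f(E))⁻¹ ∂_E H`. -/
theorem traveling_wave_hamiltonian_structure (v β : ℝ) (hv : v ≠ 0)
    (f g : ℝ → ℝ)
    (hf : ∀ E, f E = (1 - v ^ 2 * (1 + E ^ 2)) ^ 2)
    (hg : ∀ E, g E = (1 - v ^ 2) * (1 - β * v ^ 2) / v ^ 2 * E ^ 2
      + (3 * β * v ^ 2 + v ^ 2 - 4) / 6 * E ^ 4 + v ^ 2 / 9 * E ^ 6) :
    ∀ E Φ : ℝ, 1 - v ^ 2 * (1 + E ^ 2) ≠ 0 →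
      (-(deriv f E) * Φ ^ 2 / (2 * f E) - deriv g E / (2 * f E)
          = (2 * v ^ 2 * E * Φ ^ 2 - (1 / v ^ 2 - β) * E + E ^ 3 / 3)
            / (1 - v ^ 2 * (1 + E ^ 2))) ∧
      (Φ = (2 * f E)⁻¹ * deriv (fun Φ' => f E * Φ' ^ 2 + g E) Φ) ∧
      ((2 * v ^ 2 * E * Φ ^ 2 - (1 / v ^ 2 - β) * E + E ^ 3 / 3)
            / (1 - v ^ 2 * (1 + E ^ 2))
          = -(2 * f E)⁻¹ * deriv (fun E' => f E' * Φ ^ 2 + g E') E) := by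
  intro E Φ hD
  have hf' : HasDerivAt f (-4 * v ^ 2 * E * (1 - v ^ 2 * (1 + E ^ 2))) E :=
    funext hf ▸ hasDerivAt_sq_one_sub_mul_one_add_sq v E
  have hg' : HasDerivAt g (2 * (1 - v ^ 2 * (1 + E ^ 2)) * ((1 / v ^ 2 - β) * E - E ^ 3 / 3)) E :=
    funext hg ▸ (hasDerivAt_even_sextic _ _ _ E).congr_deriv (potential_deriv_factor hv β E)
  have hfE : f E ≠ 0 := hf E ▸ pow_ne_zero 2 hD
  have hΦ' : -(deriv f E) * Φ ^ 2 / (2 * f E) - deriv g E / (2 * f E)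
      = (2 * v ^ 2 * E * Φ ^ 2 - (1 / v ^ 2 - β) * E + E ^ 3 / 3) / (1 - v ^ 2 * (1 + E ^ 2)) := by
    rw [hf'.deriv, hg'.deriv, hf E]
    field_simp
    ring
  refine ⟨hΦ', ?_, ?_⟩
  · rw [deriv_mul_sq_add_const]
    field_simp
  · rw [deriv_mul_const_add hf'.differentiableAt hg'.differentiableAt, ← hΦ']
    ring
end
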